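/- arXiv:1706.07475 — 2 statements merged into one kernel-verified Lean document; each statement's English description precedes it below -/
import Mathlib

section
/- Let 𝒯 be a layering partition of a finite connected graph G, r : V → ℕ, δ a non-negative integer, let T_r be a minimum r-dominating subtree of 𝒯, and let T_δ be a minimum (r+δ)-dominating subtree of 𝒯 (a minimum δ-dominating subtree of T_r). Then |T_δ| ≤ |T_r| − δ·Λ(T_δ), where |T| denotes the number of clusters of a subtree T and Λ(T_δ) is the number of leaves of the rooted tree T_δ. -/
open SimpleGraph

variable {V : Type}

/-- `u` and `v` belong to the same cluster of the layering partition of `G`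
with start vertex `s`: they are in the same layer (same distance from `s`) and
are connected by a walk using only vertices in the same or upper layers. -/
def layerRel (G : SimpleGraph V) (s u v : V) : Prop :=
  G.dist s u = G.dist s v ∧
    ∃ w : G.Walk u v, ∀ x ∈ w.support, G.dist s u ≤ G.dist s x

theorem layerRel_refl (G : SimpleGraph V) (s u : V) : layerRel G s u u :=
  ⟨rfl, SimpleGraph.Walk.nil, by simp⟩

theorem layerRel_symm (G : SimpleGraph V) (s : V) : ∀ {u v : V},
    layerRel G s u v → layerRel G s v u := by
  rintro u v ⟨h1, w, hw⟩
  exact ⟨h1.symm, w.reverse, fun x hx => h1 ▸ hw x (by simpa using hx)⟩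

theorem layerRel_trans (G : SimpleGraph V) (s : V) : ∀ {u v w : V},
    layerRel G s u v → layerRel G s v w → layerRel G s u w := by
  rintro u v w ⟨h1, p, hp⟩ ⟨h2, q, hq⟩
  refine ⟨h1.trans h2, p.append q, fun x hx => ?_⟩
  rcases (SimpleGraph.Walk.mem_support_append_iff p q).mp hx with h | h
  · exact hp x h
  · exact h1 ▸ hq x h

/-- The setoid on vertices whose classes are the clusters of the layering partition. -/
def layerSetoid (G : SimpleGraph V) (s : V) : Setoid V :=
  ⟨layerRel G s, ⟨layerRel_refl G s, layerRel_symm G s, layerRel_trans G s⟩⟩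

/-- The clusters of the layering partition of `G` with start vertex `s`. -/
def Cluster (G : SimpleGraph V) (s : V) : Type _ := Quotient (layerSetoid G s)

/-- The cluster containing a vertex. -/
def toCluster (G : SimpleGraph V) (s : V) (v : V) : Cluster G s :=
  Quotient.mk (layerSetoid G s) v

/-- The layering partition 𝒯 seen as a graph on the clusters: two (distinct) clusters are
adjacent iff `G` contains an edge with one endpoint in each.  (This graph is a tree.) -/
def clusterGraph (G : SimpleGraph V) (s : V) : SimpleGraph (Cluster G s) where
  Adj C C' := C ≠ C' ∧ ∃ u v : V, toCluster G s u = C ∧ toCluster G s v = C' ∧ G.Adj u v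
  symm := by
    constructor
    rintro C C' ⟨hne, u, v, hu, hv, ha⟩
    exact ⟨hne.symm, v, u, hv, hu, ha.symm⟩
  loopless := by
    constructor
    rintro C ⟨hne, -⟩
    exact hne rfl

/-- The tree distance `d_𝒯(u,v)` between the clusters containing `u` and `v`. -/
noncomputable def layerDist (G : SimpleGraph V) (s u v : V) : ℕ :=
  (clusterGraph G s).dist (toCluster G s u) (toCluster G s v)

/-- `Δ` is the maximum diameter in `G` of a cluster of the layering partition. -/
def IsMaxClusterDiam (G : SimpleGraph V) (s : V) (Δ : ℕ) : Prop :=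
  IsGreatest {d : ℕ | ∃ u v : V, layerRel G s u v ∧ G.dist u v = d} Δ

/-- `D` is an `(r+φ)`-dominating set of `G`: every vertex `v` is within distance
`r v + φ` of `D`. -/
def IsRPhiDomSet (G : SimpleGraph V) (r : V → ℕ) (φ : ℕ) (D : Set V) : Prop :=
  ∀ v : V, ∃ u ∈ D, G.dist v u ≤ r v + φ

/-- `S` induces a connected subgraph of `G`. -/
def IsConnSet (G : SimpleGraph V) (S : Set V) : Prop := (G.induce S).Connected

/-- `r(C)`, the minimum of `r` over the vertices of the cluster `C`. -/
noncomputable def clusterRadius (G : SimpleGraph V) (s : V) (r : V → ℕ)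
    (C : Cluster G s) : ℕ :=
  sInf (r '' {v : V | toCluster G s v = C})

/-- A subtree of the layering partition 𝒯, i.e. a connected set of clusters. -/
def IsSubtree (G : SimpleGraph V) (s : V) (T' : Set (Cluster G s)) : Prop :=
  ((clusterGraph G s).induce T').Connected

/-- `T'` is an `(r+δ)`-dominating subtree of 𝒯: a subtree such that every cluster `C`
of 𝒯 is within tree-distance `r(C) + δ` of some cluster of `T'`. -/
def IsDomSubtree (G : SimpleGraph V) (s : V) (r : V → ℕ) (δ : ℕ)
    (T' : Set (Cluster G s)) : Prop :=
  IsSubtree G s T' ∧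
    ∀ C : Cluster G s, ∃ C' ∈ T',
      (clusterGraph G s).dist C C' ≤ clusterRadius G s r C + δ

/-- `T'` is a minimum `(r+δ)`-dominating subtree of 𝒯 (fewest clusters). -/
def IsMinDomSubtree (G : SimpleGraph V) (s : V) (r : V → ℕ) (δ : ℕ)
    (T' : Set (Cluster G s)) : Prop :=
  IsDomSubtree G s r δ T' ∧
    ∀ T'' : Set (Cluster G s), IsDomSubtree G s r δ T'' → T'.ncard ≤ T''.ncard

/-- The degree of a cluster `C` inside a set `T'` of clusters. -/
noncomputable def clusterDegree (G : SimpleGraph V) (s : V)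
    (T' : Set (Cluster G s)) (C : Cluster G s) : ℕ :=
  {C' : Cluster G s | C' ∈ T' ∧ (clusterGraph G s).Adj C C'}.ncard

/-- `R` is the root of the subtree `T'` of 𝒯 (with the rooting inherited from 𝒯,
whose root is the cluster `{s}`): the cluster of `T'` closest to the root of 𝒯. -/
def IsRootOf (G : SimpleGraph V) (s : V) (T' : Set (Cluster G s))
    (R : Cluster G s) : Prop :=
  R ∈ T' ∧ ∀ C ∈ T',
    (clusterGraph G s).dist (toCluster G s s) R ≤
      (clusterGraph G s).dist (toCluster G s s) C

/-- `Λ(T')`: the number of leaves of the subtree `T'` rooted at `R`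
(`0` if `T'` is a single node). -/
noncomputable def numLeaves (G : SimpleGraph V) (s : V) (T' : Set (Cluster G s))
    (R : Cluster G s) : ℕ :=
  {C : Cluster G s | C ∈ T' ∧ C ≠ R ∧ clusterDegree G s T' C = 1}.ncard

/-- The eccentricity of a set `S` in `G`: `max_v min_{u ∈ S} d_G(v,u)`. -/
noncomputable def eccSet (G : SimpleGraph V) (S : Set V) : ℕ :=
  sSup (Set.range fun v : V => sInf ((G.dist v) '' S))


/-!
The layering partition is a tree: a cluster of layer `i > 0` has exactly one neighbour in
layer `i - 1`. In a tree the subtrees are exactly the nonempty geodesically convex sets of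
vertices, and the argument is metric.

Let `e` be a leaf of `T_δ`. By minimality `T_δ \ {e}` is no longer `(r+δ)`-dominating, so some
cluster `C` has `d(C, e) = r(C) + δ` while every other cluster of `T_δ` is farther from `C`;
then `e` lies on the geodesic from `C` to each cluster of `T_δ`. `T_r` contains a cluster `u`
with `d(C, u) ≤ r(C)`, and the geodesic from `e` to `u` starts with `δ` clusters of the geodesic
from `e` to `C`: the spur of `e`, outside `T_δ`. For two leaves `e ≠ e'` the geodesic from `u`
to `u'` passes through `e` and `e'`, so by convexity `T_r` contains `T_δ` and all spurs, and
spurs of distinct leaves are disjoint.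
-/

namespace Set

lemma ncard_add_mul_ncard_le_of_injOn {α β : Type*} [Finite α] {S D : Set α} {E : Set β}
    {δ : ℕ} {f : β × ℕ → α} (hSD : S ⊆ D) (hf : InjOn f (E ×ˢ Icc 1 δ))
    (hfD : ∀ p ∈ E ×ˢ Icc 1 δ, f p ∈ D \ S) : S.ncard + δ * E.ncard ≤ D.ncard := by
  have hdisj : Disjoint S (f '' (E ×ˢ Icc 1 δ)) :=
    disjoint_right.2 fun _ ⟨p, hp, hpx⟩ => hpx ▸ (hfD p hp).2
  have hsub : S ∪ f '' (E ×ˢ Icc 1 δ) ⊆ D :=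
    union_subset hSD (image_subset_iff.2 fun p hp => (hfD p hp).1)
  calc S.ncard + δ * E.ncard = (S ∪ f '' (E ×ˢ Icc 1 δ)).ncard := by
        rw [ncard_union_eq hdisj, hf.ncard_image, ncard_prod, ncard_Icc_nat,
          Nat.add_sub_cancel, mul_comm]
    _ ≤ D.ncard := ncard_le_ncard hsub

end Set

namespace SimpleGraph

variable {α : Type*} {G : SimpleGraph α} {a b c d x y z : α}

def Between (G : SimpleGraph α) (x y z : α) : Prop :=
  G.dist x y + G.dist y z = G.dist x z

@[simp] lemma between_self_left : G.Between x x y := by simp [Between]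

@[simp] lemma between_self_right : G.Between x y y := by simp [Between]

lemma Between.symm (h : G.Between x y z) : G.Between z y x := by
  unfold Between at h ⊢
  rw [dist_comm, add_comm, dist_comm (u := y), h, dist_comm]

noncomputable def degreeIn (G : SimpleGraph α) (S : Set α) (v : α) : ℕ :=
  {w | w ∈ S ∧ G.Adj v w}.ncard

lemma degreeIn_le_one_iff [Finite α] {S : Set α} {v : α} :
    G.degreeIn S v ≤ 1 ↔ ∀ x ∈ S, ∀ y ∈ S, G.Adj v x → G.Adj v y → x = y := by
  rw [degreeIn, Set.ncard_le_one]
  exact ⟨fun h x hx y hy hvx hvy => h x ⟨hx, hvx⟩ y ⟨hy, hvy⟩,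
    fun h x hx y hy => h x hx.1 y hy.1 hx.2 hy.2⟩

def IsDominating (G : SimpleGraph α) (ρ : α → ℕ) (S : Set α) : Prop :=
  ∀ c, ∃ w ∈ S, G.dist c w ≤ ρ c

namespace Connected

variable (hG : G.Connected)
include hG

lemma between_of_add_le (h : G.dist x y + G.dist y z ≤ G.dist x z) : G.Between x y z :=
  le_antisymm h hG.dist_triangle

lemma between_trans (h₁ : G.Between a b c) (h₂ : G.Between a c d) :
    G.Between a b d ∧ G.Between b c d := by
  have := hG.dist_triangle (u := a) (v := b) (w := d)
  have := hG.dist_triangle (u := b) (v := c) (w := d)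
  unfold Between at h₁ h₂ ⊢
  omega

lemma exists_between_dist_eq {t : ℕ} (ht : t ≤ G.dist a b) :
    ∃ z, G.dist a z = t ∧ G.Between a z b := by
  obtain ⟨p, hp⟩ := hG.exists_walk_length_eq_dist a b
  have h₁ := dist_le (p.take t)
  have h₂ := dist_le (p.drop t)
  rw [Walk.take_length] at h₁
  rw [Walk.drop_length] at h₂
  have := hG.dist_triangle (u := a) (v := p.getVert t) (w := b)
  exact ⟨p.getVert t, by omega, by unfold Between; omega⟩

lemma between_of_mem_support {p : G.Walk a b} (hp : p.length = G.dist a b)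
    (hz : z ∈ p.support) : G.Between a z b := by
  classical
  have hlen := congrArg Walk.length (p.take_spec hz)
  rw [Walk.length_append] at hlen
  have := dist_le (p.takeUntil z hz)
  have := dist_le (p.dropUntil z hz)
  exact hG.between_of_add_le (by omega)

lemma induce_connected_of_between {S : Set α} (hne : S.Nonempty)
    (hS : ∀ a ∈ S, ∀ b ∈ S, ∀ z, G.Between a z b → z ∈ S) : (G.induce S).Connected := by
  refine (connected_iff _).2 ⟨?_, hne.to_subtype⟩
  rintro ⟨a, ha⟩ ⟨b, hb⟩
  obtain ⟨p, hp⟩ := hG.exists_walk_length_eq_dist a b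
  exact ⟨p.induce S fun z hz => hS a ha b hb z (hG.between_of_mem_support hp hz)⟩

end Connected

namespace IsTree

variable (hG : G.IsTree)
include hG

lemma length_eq_dist {p : G.Walk a b} (hp : p.IsPath) : p.length = G.dist a b := by
  obtain ⟨q, hq, hlen⟩ := hG.connected.exists_path_of_dist a b
  have : (⟨p, hp⟩ : G.Path a b) = ⟨q, hq⟩ := (hG.isAcyclic.subsingleton_path a b).elim _ _
  rw [show p = q from congrArg Subtype.val this, hlen]

lemma between_iff_mem_support {p : G.Walk a b} (hp : p.IsPath) :
    G.Between a z b ↔ z ∈ p.support := by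
  refine ⟨fun h => ?_, hG.connected.between_of_mem_support (hG.length_eq_dist hp)⟩
  obtain ⟨q₁, hq₁⟩ := hG.connected.exists_walk_length_eq_dist a z
  obtain ⟨q₂, hq₂⟩ := hG.connected.exists_walk_length_eq_dist z b
  have hlen : (q₁.append q₂).length = G.dist a b := by
    rw [Walk.length_append, hq₁, hq₂, h]
  have : (⟨p, hp⟩ : G.Path a b) = ⟨_, Walk.isPath_of_length_eq_dist _ hlen⟩ :=
    (hG.isAcyclic.subsingleton_path a b).elim _ _
  rw [show p = q₁.append q₂ from congrArg Subtype.val this, Walk.mem_support_append_iff]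
  exact Or.inl q₁.end_mem_support

lemma eq_of_between_of_dist_eq {z' : α} (h : G.Between a z b) (h' : G.Between a z' b)
    (hd : G.dist a z = G.dist a z') : z = z' := by
  classical
  obtain ⟨p, hp, -⟩ := hG.connected.exists_path_of_dist a b
  have hz := (hG.between_iff_mem_support hp).1 h
  have hz' := (hG.between_iff_mem_support hp).1 h'
  rw [← p.getVert_length_takeUntil hz, ← p.getVert_length_takeUntil hz',
    hG.length_eq_dist (hp.takeUntil hz), hG.length_eq_dist (hp.takeUntil hz'), hd]

lemma mem_of_between {S : Set α} (hS : (G.induce S).Connected) (ha : a ∈ S) (hb : b ∈ S)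
    (h : G.Between a z b) : z ∈ S := by
  classical
  obtain ⟨p⟩ := hS.preconnected ⟨a, ha⟩ ⟨b, hb⟩
  have hp : ∀ x ∈ (p.map (Embedding.induce S).toHom).support, x ∈ S := by
    intro x hx
    rw [Walk.support_map, List.mem_map] at hx
    obtain ⟨y, -, rfl⟩ := hx
    exact y.2
  exact hp z (Walk.support_bypass_subset_support _
    ((hG.between_iff_mem_support (Walk.bypass_isPath _)).1 h))

lemma connected_induce_iff {S : Set α} :
    (G.induce S).Connected ↔ S.Nonempty ∧ ∀ a ∈ S, ∀ b ∈ S, ∀ z, G.Between a z b → z ∈ S :=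
  ⟨fun hS => ⟨Set.nonempty_coe_sort.1 hS.nonempty, fun _ ha _ hb _ => hG.mem_of_between hS ha hb⟩,
    fun h => hG.connected.induce_connected_of_between h.1 h.2⟩

lemma exists_median (a b c : α) :
    ∃ m, G.Between a m b ∧ G.Between a m c ∧ G.Between b m c := by
  induction hn : G.dist a b generalizing a with
  | zero =>
    obtain rfl := hG.connected.dist_eq_zero_iff.1 hn
    exact ⟨a, between_self_left, between_self_left, between_self_left⟩
  | succ n ih =>
    obtain ⟨a', haa', hab⟩ := hG.connected.exists_between_dist_eq (a := a) (b := b) (t := 1)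
      (by omega)
    have hadj : G.Adj a a' := dist_eq_one_iff_adj.1 haa'
    have ha'b : G.dist a' b = n := by unfold Between at hab; omega
    obtain ⟨m, h₁, h₂, h₃⟩ := ih a' ha'b
    have := hG.connected.dist_triangle (u := a) (v := a') (w := m)
    have := dist_comm (G := G) (u := c) (v := a)
    have := dist_comm (G := G) (u := c) (v := a')
    rcases hG.dist_eq_dist_add_one_of_adj c hadj with hc | hc
    · refine ⟨m, hG.connected.between_of_add_le ?_, hG.connected.between_of_add_le ?_, h₃⟩
      · unfold Between at hab h₁; omega
      · unfold Between at h₂; omega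
    -- Here `a` is the neighbour of `a'` towards `c` but not towards `b`, so the median of
    -- `a', b, c` is `a'` itself.
    · have hm : m = a' := by
        by_contra hm
        obtain ⟨z, hz, ha'zm⟩ := hG.connected.exists_between_dist_eq (a := a') (b := m)
          (t := 1) (hG.connected.pos_dist_of_ne (Ne.symm hm))
        have := dist_comm (G := G) (u := a') (v := a)
        have ha'ac : G.Between a' a c := by unfold Between; omega
        obtain rfl : z = a := hG.eq_of_between_of_dist_eq
          (hG.connected.between_trans ha'zm h₂).1 ha'ac (by omega)
        have ha'zb := (hG.connected.between_trans ha'zm h₁).1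
        unfold Between at ha'zb hab
        omega
      subst hm
      have := dist_comm (G := G) (u := b) (v := a)
      have := dist_comm (G := G) (u := b) (v := m)
      refine ⟨a, between_self_left, between_self_left, ?_⟩
      unfold Between at h₃ hab ⊢
      omega

lemma between_of_between_of_dist_le (hx : G.Between a x b) (hy : G.Between a y b)
    (hle : G.dist a x ≤ G.dist a y) : G.Between a x y := by
  obtain ⟨z, hz, hazy⟩ := hG.connected.exists_between_dist_eq (a := a) (b := y) hle
  rwa [hG.eq_of_between_of_dist_eq (hG.connected.between_trans hazy hy).1 hx hz] at hazy

lemma between_trans_of_ne (h₁ : G.Between a b c) (h₂ : G.Between b c d) (hbc : b ≠ c) :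
    G.Between a b d ∧ G.Between a c d := by
  obtain ⟨m, hamb, hamd, hbmd⟩ := hG.exists_median a b d
  have := hG.connected.pos_dist_of_ne hbc
  have := hG.connected.dist_triangle (u := a) (v := m) (w := c)
  have := dist_comm (G := G) (u := m) (v := b)
  have := dist_comm (G := G) (u := m) (v := c)
  have hmb : G.dist b m = 0 := by
    rcases le_total (G.dist b m) (G.dist b c) with hle | hle
    · have hbmc := hG.between_of_between_of_dist_le hbmd h₂ hle
      unfold Between at h₁ hamb hbmc
      omega
    · have hbcm := hG.between_of_between_of_dist_le h₂ hbmd hle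
      unfold Between at h₁ hamb hbcm
      omega
  unfold Between at h₁ h₂ hamb hamd hbmd ⊢
  omega

lemma between_of_forall_dist_le {S : Set α} (hS : (G.induce S).Connected) {g w : α}
    (hg : g ∈ S) (hmin : ∀ v ∈ S, G.dist c g ≤ G.dist c v) (hw : w ∈ S) : G.Between c g w := by
  obtain ⟨m, hcmg, hcmw, hgmw⟩ := hG.exists_median c g w
  have := hmin m (hG.mem_of_between hS hg hw hgmw)
  have := dist_comm (G := G) (u := m) (v := g)
  unfold Between at hcmg hcmw hgmw ⊢
  omega

lemma connected_induce_diff_singleton [Finite α] {S : Set α} (hS : (G.induce S).Connected)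
    {v : α} (hv : G.degreeIn S v ≤ 1) (hne : (S \ {v}).Nonempty) :
    (G.induce (S \ {v})).Connected := by
  have hconv := ((hG.connected_induce_iff).1 hS).2
  refine (hG.connected_induce_iff).2 ⟨hne, fun a ha b hb z hz => ⟨hconv a ha.1 b hb.1 z hz, ?_⟩⟩
  rintro rfl
  have hza : G.dist z a ≠ 0 := fun h => ha.2 (hG.connected.dist_eq_zero_iff.1 h).symm
  have hzb : G.dist z b ≠ 0 := fun h => hb.2 (hG.connected.dist_eq_zero_iff.1 h).symm
  obtain ⟨x, hx, hzxa⟩ := hG.connected.exists_between_dist_eq (a := z) (b := a) (t := 1)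
    (by omega)
  obtain ⟨y, hy, hzyb⟩ := hG.connected.exists_between_dist_eq (a := z) (b := b) (t := 1)
    (by omega)
  have hzS : z ∈ S := hconv a ha.1 b hb.1 z hz
  obtain rfl : x = y := (degreeIn_le_one_iff.1 hv) x (hconv z hzS a ha.1 x hzxa)
    y (hconv z hzS b hb.1 y hzyb) (dist_eq_one_iff_adj.1 hx) (dist_eq_one_iff_adj.1 hy)
  have := hG.connected.dist_triangle (u := a) (v := x) (w := b)
  have := dist_comm (G := G) (u := a) (v := z)
  have := dist_comm (G := G) (u := a) (v := x)
  unfold Between at hz hzxa hzyb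
  omega

lemma exists_between_degreeIn_le_one [Finite α] {S : Set α} (x : α) (hy : y ∈ S) :
    ∃ e ∈ S, G.degreeIn S e ≤ 1 ∧ G.Between x y e := by
  obtain ⟨e, ⟨he, hxye⟩, hmax⟩ := Set.exists_max_image {e | e ∈ S ∧ G.Between x y e}
    (G.dist x) (Set.toFinite _) ⟨y, hy, between_self_right⟩
  refine ⟨e, he, degreeIn_le_one_iff.2 fun z₁ hz₁ z₂ hz₂ h₁ h₂ => ?_, hxye⟩
  -- by maximality of `e`, every neighbour of `e` in `S` is closer to `x`
  have toward : ∀ z ∈ S, G.Adj e z → G.Between x z e ∧ G.dist x z + 1 = G.dist x e := by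
    intro z hz hadj
    have hez : G.dist e z = 1 := dist_eq_one_iff_adj.2 hadj
    have := dist_comm (G := G) (u := z) (v := e)
    rcases hG.dist_eq_dist_add_one_of_adj x hadj with h | h
    · exact ⟨by unfold Between; omega, h.symm⟩
    · have hxez : G.Between x e z := by unfold Between; omega
      have := hmax z ⟨hz, (hG.connected.between_trans hxye hxez).1⟩
      omega
  obtain ⟨hb₁, hd₁⟩ := toward z₁ hz₁ h₁
  obtain ⟨hb₂, hd₂⟩ := toward z₂ hz₂ h₂
  exact hG.eq_of_between_of_dist_eq hb₁ hb₂ (by omega)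

lemma exists_ends_between [Finite α] {S : Set α} (hx : x ∈ S) (hy : y ∈ S) (hxy : x ≠ y) :
    ∃ e₁ ∈ S, ∃ e₂ ∈ S, G.degreeIn S e₁ ≤ 1 ∧ G.degreeIn S e₂ ≤ 1 ∧ e₁ ≠ e₂ ∧
      G.Between e₁ x e₂ := by
  obtain ⟨e₂, he₂, hd₂, hxye₂⟩ := hG.exists_between_degreeIn_le_one x hy
  obtain ⟨e₁, he₁, hd₁, he₂xe₁⟩ := hG.exists_between_degreeIn_le_one e₂ hx
  refine ⟨e₁, he₁, e₂, he₂, hd₁, hd₂, ?_, he₂xe₁.symm⟩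
  rintro rfl
  have := hG.connected.pos_dist_of_ne hxy
  unfold Between at hxye₂ he₂xe₁
  rw [dist_self] at he₂xe₁
  omega

lemma exists_dist_eq_of_degreeIn_le_one [Finite α] {ρ : α → ℕ} {S : Set α}
    (hS : (G.induce S).Connected) (hS₂ : S.Nontrivial) (hdom : G.IsDominating ρ S)
    (hmin : ∀ S', (G.induce S').Connected → G.IsDominating ρ S' → S.ncard ≤ S'.ncard)
    {e : α} (he : e ∈ S) (hdeg : G.degreeIn S e ≤ 1) :
    ∃ c, G.dist c e = ρ c ∧ ∀ v ∈ S, v ≠ e → ρ c < G.dist c v := by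
  obtain ⟨w, hw, hwe⟩ := hS₂.exists_ne e
  obtain ⟨c, hc⟩ : ∃ c, ∀ v ∈ S \ {e}, ρ c < G.dist c v := by
    by_contra! h
    have := hmin _ (hG.connected_induce_diff_singleton hS hdeg ⟨w, hw, hwe⟩) h
    have := Set.ncard_sdiff_singleton_lt_of_mem he
    omega
  have hc' : ∀ v ∈ S, v ≠ e → ρ c < G.dist c v := fun v hv hve => hc v ⟨hv, hve⟩
  obtain ⟨v, hv, hcv⟩ := hdom c
  obtain rfl : v = e := by_contra fun h => (hc' v hv h).not_ge hcv
  obtain ⟨f, hf, hvfw⟩ := hG.connected.exists_between_dist_eq (a := v) (b := w) (t := 1)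
    (hG.connected.pos_dist_of_ne hwe.symm)
  have hfv : f ≠ v := by rintro rfl; simp at hf
  have := hc' f (hG.mem_of_between hS he hw hvfw) hfv
  have := hG.connected.dist_triangle (u := c) (v := v) (w := f)
  exact ⟨c, by omega, hc'⟩

lemma exists_branch_point {S : Set α} (hS : (G.induce S).Connected) {c e u : α} {r δ : ℕ}
    (he : e ∈ S) (hce : G.dist c e = r + δ) (hfar : ∀ v ∈ S, v ≠ e → r + δ < G.dist c v)
    (hcu : G.dist c u ≤ r) :
    ∃ p, δ ≤ G.dist e p ∧ G.Between e p u ∧ ∀ w ∈ S, G.Between p e w := by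
  have hcew : ∀ w ∈ S, G.Between c e w := fun w hw =>
    hG.between_of_forall_dist_le hS he (fun v hv => by
      rcases eq_or_ne v e with rfl | h
      exacts [le_rfl, by have := hfar v hv h; omega]) hw
  obtain ⟨p, hcpe, hcpu, hepu⟩ := hG.exists_median c e u
  have := dist_comm (G := G) (u := e) (v := p)
  refine ⟨p, ?_, hepu, fun w hw => (hG.connected.between_trans hcpe (hcew w hw)).2⟩
  unfold Between at hcpe hcpu
  omega

lemma exists_spur [Finite α] {ρ : α → ℕ} {δ : ℕ} {D S : Set α} (hDdom : G.IsDominating ρ D)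
    (hS : (G.induce S).Connected) (hS₂ : S.Nontrivial)
    (hSdom : G.IsDominating (fun c => ρ c + δ) S)
    (hmin : ∀ S', (G.induce S').Connected → G.IsDominating (fun c => ρ c + δ) S' →
      S.ncard ≤ S'.ncard)
    (hδ : δ ≠ 0) {e : α} (he : e ∈ S) (hdeg : G.degreeIn S e ≤ 1) :
    ∃ u ∈ D, (∀ w ∈ S, G.Between u e w) ∧
      ∀ j ≤ δ, ∃ q, G.dist e q = j ∧ G.Between u q e ∧ ∀ w ∈ S, G.Between q e w := by
  obtain ⟨c, hce, hfar⟩ := hG.exists_dist_eq_of_degreeIn_le_one hS hS₂ hSdom hmin he hdeg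
  obtain ⟨u, hu, hcu⟩ := hDdom c
  obtain ⟨p, hδp, hepu, hpew⟩ := hG.exists_branch_point hS he hce hfar hcu
  have hpe : p ≠ e := by rintro rfl; simp at hδp; omega
  refine ⟨u, hu, fun w hw => (hG.between_trans_of_ne hepu.symm (hpew w hw) hpe).2,
    fun j hj => ?_⟩
  obtain ⟨q, hq, heqp⟩ := hG.connected.exists_between_dist_eq (a := e) (b := p) (t := j)
    (by omega)
  exact ⟨q, hq, (hG.connected.between_trans heqp hepu).1.symm,
    fun w hw => (hG.connected.between_trans heqp.symm (hpew w hw)).2⟩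

section Hull

variable {S D : Set α} {u : α → α} (hD : (G.induce D).Connected)
  (hS₂ : S.Nontrivial) (hu : ∀ e ∈ S, G.degreeIn S e ≤ 1 → u e ∈ D)
  (hfar : ∀ e ∈ S, G.degreeIn S e ≤ 1 → ∀ w ∈ S, G.Between (u e) e w)
include hD hu hfar

lemma mem_of_dist_add_le_of_ends {e e' : α} (he : e ∈ S) (hd : G.degreeIn S e ≤ 1)
    (he' : e' ∈ S) (hd' : G.degreeIn S e' ≤ 1) (hee' : e ≠ e')
    (hx : G.dist (u e) x + G.dist x (u e') ≤
      G.dist (u e) e + G.dist e e' + G.dist e' (u e')) : x ∈ D := by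
  have hee'u := (hfar e' he' hd' e he).symm
  have heu := (hG.between_trans_of_ne (hfar e he hd e' he') hee'u hee').1
  refine hG.mem_of_between hD (hu e he hd) (hu e' he' hd') (hG.connected.between_of_add_le ?_)
  unfold Between at hee'u heu
  omega

variable [Finite α]
include hS₂

lemma subset_of_forall_between_end : S ⊆ D := by
  intro x hx
  obtain ⟨y, hy, hyx⟩ := hS₂.exists_ne x
  obtain ⟨e₁, he₁, e₂, he₂, hd₁, hd₂, he₁₂, hbtw⟩ := hG.exists_ends_between hx hy hyx.symm
  refine hG.mem_of_dist_add_le_of_ends hD hu hfar he₁ hd₁ he₂ hd₂ he₁₂ ?_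
  have := hG.connected.dist_triangle (u := u e₁) (v := e₁) (w := x)
  have := hG.connected.dist_triangle (u := x) (v := e₂) (w := u e₂)
  unfold Between at hbtw
  omega

lemma mem_of_between_end {e : α} (he : e ∈ S) (hd : G.degreeIn S e ≤ 1)
    (hx : G.Between (u e) x e) : x ∈ D := by
  obtain ⟨w, hw, hwe⟩ := hS₂.exists_ne e
  obtain ⟨e', he', hd', hewe'⟩ := hG.exists_between_degreeIn_le_one e hw
  have hee' : e ≠ e' := by
    rintro rfl
    have := hG.connected.pos_dist_of_ne hwe
    have := dist_comm (G := G) (u := w) (v := e)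
    unfold Between at hewe'
    rw [dist_self] at hewe'
    omega
  refine hG.mem_of_dist_add_le_of_ends hD hu hfar he hd he' hd' hee' ?_
  have := hG.connected.dist_triangle (u := x) (v := e) (w := u e')
  have := hG.connected.dist_triangle (u := e) (v := e') (w := u e')
  unfold Between at hx
  omega

end Hull

theorem ncard_add_mul_ncard_ends_le [Finite α] {ρ : α → ℕ} {δ : ℕ} {D S : Set α}
    (hD : (G.induce D).Connected) (hDdom : G.IsDominating ρ D)
    (hS : (G.induce S).Connected) (hS₂ : S.Nontrivial)
    (hSdom : G.IsDominating (fun c => ρ c + δ) S)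
    (hmin : ∀ S', (G.induce S').Connected → G.IsDominating (fun c => ρ c + δ) S' →
      S.ncard ≤ S'.ncard) (hδ : δ ≠ 0) :
    S.ncard + δ * {e | e ∈ S ∧ G.degreeIn S e ≤ 1}.ncard ≤ D.ncard := by
  choose! u hu hfar hspur using
    fun e (he : e ∈ S) hdeg => hG.exists_spur hDdom hS hS₂ hSdom hmin hδ he hdeg
  choose! q hqe hqu hqw using hspur
  refine Set.ncard_add_mul_ncard_le_of_injOn (f := fun p => q p.1 p.2)
    (hG.subset_of_forall_between_end hD hS₂ hu hfar) ?_ ?_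
  · rintro ⟨e, j⟩ ⟨⟨he, hd⟩, hj⟩ ⟨e', j'⟩ ⟨⟨he', hd'⟩, hj'⟩ (hqq : q e j = q e' j')
    obtain rfl | hee' := eq_or_ne e e'
    · rw [← hqe e he hd j hj.2, ← hqe e he' hd' j' hj'.2, hqq]
    -- the spur point `q e j` sees `e'` behind `e`, and `q e' j'` sees `e` behind `e'`
    · have h₁ := hqw e he hd j hj.2 e' he'
      have h₂ := hqw e' he' hd' j' hj'.2 e he
      have := hG.connected.pos_dist_of_ne hee'
      have := dist_comm (G := G) (u := e) (v := e')
      rw [← hqq] at h₂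
      unfold Between at h₁ h₂
      omega
  · rintro ⟨e, j⟩ ⟨⟨he, hd⟩, hj⟩
    refine ⟨hG.mem_of_between_end hD hS₂ hu hfar he hd (hqu e he hd j hj.2), fun hqS => ?_⟩
    have h₁ := hqw e he hd j hj.2 _ hqS
    have := hqe e he hd j hj.2
    have := dist_comm (G := G) (u := q e j) (v := e)
    have := hj.1
    unfold Between at h₁
    rw [dist_self] at h₁
    omega

theorem ncard_add_mul_ncard_leaves_le [Finite α] {ρ : α → ℕ} {δ : ℕ} {D S : Set α}
    (hD : (G.induce D).Connected) (hDdom : G.IsDominating ρ D)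
    (hS : (G.induce S).Connected) (hSdom : G.IsDominating (fun c => ρ c + δ) S)
    (hmin : ∀ S', (G.induce S').Connected → G.IsDominating (fun c => ρ c + δ) S' →
      S.ncard ≤ S'.ncard) :
    S.ncard + δ * {e | e ∈ S ∧ G.degreeIn S e = 1}.ncard ≤ D.ncard := by
  have hSD : S.ncard ≤ D.ncard :=
    hmin D hD fun c => (hDdom c).imp fun _ hw => ⟨hw.1, hw.2.trans (Nat.le_add_right _ _)⟩
  rcases eq_or_ne δ 0 with rfl | hδ
  · simpa using hSD
  rcases S.subsingleton_or_nontrivial with hS₁ | hS₂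
  · have : {e | e ∈ S ∧ G.degreeIn S e = 1} = ∅ := by
      refine Set.eq_empty_of_forall_notMem fun e ⟨he, hdeg⟩ => ?_
      obtain ⟨w, hw, hew⟩ : {w | w ∈ S ∧ G.Adj e w}.Nonempty :=
        Set.nonempty_of_ncard_ne_zero (by rw [← degreeIn, hdeg]; exact one_ne_zero)
      exact hew.ne (hS₁ he hw)
    simpa [this] using hSD
  have hsub : {e | e ∈ S ∧ G.degreeIn S e = 1} ⊆ {e | e ∈ S ∧ G.degreeIn S e ≤ 1} :=
    fun e he => ⟨he.1, he.2.le⟩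
  calc _ ≤ S.ncard + δ * {e | e ∈ S ∧ G.degreeIn S e ≤ 1}.ncard :=
        Nat.add_le_add_left (Nat.mul_le_mul_left δ (Set.ncard_le_ncard hsub)) _
    _ ≤ D.ncard := hG.ncard_add_mul_ncard_ends_le hD hDdom hS hS₂ hSdom hmin hδ

end IsTree

lemma isAcyclic_of_unique_lower_adj (ℓ : α → ℕ) (hne : ∀ ⦃u v⦄, G.Adj u v → ℓ u ≠ ℓ v)
    (huniq : ∀ ⦃u v w⦄, G.Adj u v → G.Adj u w → ℓ v < ℓ u → ℓ w < ℓ u → v = w) :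
    G.IsAcyclic := by
  classical
  intro v c hc
  obtain ⟨x, hx, hmax⟩ := c.support.toFinset.exists_max_image ℓ ⟨v, by simp⟩
  rw [List.mem_toFinset] at hx
  -- rotated to start at a vertex of maximal level, the cycle leaves and re-enters it through
  -- two distinct lower neighbours
  have hc' := hc.rotate hx
  have hnil := hc'.not_nil
  have hlt : ∀ {y}, G.Adj x y → y ∈ (c.rotate x hx).support → ℓ y < ℓ x := fun hxy hy =>
    lt_of_le_of_ne (hmax _ (by simpa using hy)) (hne hxy).symm
  exact hc'.snd_ne_penultimate (huniq (Walk.adj_snd hnil) (Walk.adj_penultimate hnil).symm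
    (hlt (Walk.adj_snd hnil) (Walk.getVert_mem_support _ _))
    (hlt (Walk.adj_penultimate hnil).symm (Walk.getVert_mem_support _ _)))

end SimpleGraph

section LayeringPartition

variable {G : SimpleGraph V} {s : V}

noncomputable def clusterLevel (G : SimpleGraph V) (s : V) : Cluster G s → ℕ :=
  Quotient.lift (G.dist s) fun _ _ h => h.1

@[simp] lemma clusterLevel_toCluster (v : V) :
    clusterLevel G s (toCluster G s v) = G.dist s v := rfl

lemma toCluster_surjective : Function.Surjective (toCluster G s) :=
  Quotient.mk_surjective

lemma toCluster_eq_of_adj {u v : V} (h : G.Adj u v) (hd : G.dist s u = G.dist s v) :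
    toCluster G s u = toCluster G s v :=
  Quotient.sound ⟨hd, Walk.cons h Walk.nil, by simp [hd]⟩

lemma clusterLevel_of_adj {C C' : Cluster G s} (h : (clusterGraph G s).Adj C C') :
    clusterLevel G s C' + 1 = clusterLevel G s C ∨
      clusterLevel G s C + 1 = clusterLevel G s C' := by
  obtain ⟨hne, u, v, rfl, rfl, huv⟩ := h
  have := huv.diff_dist_adj (u := s)
  have : G.dist s u ≠ G.dist s v := fun hd => hne (toCluster_eq_of_adj huv hd)
  simp only [clusterLevel_toCluster]
  omega

lemma exists_adj_clusterLevel_succ (hconn : G.Connected) {C : Cluster G s}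
    (h : clusterLevel G s C ≠ 0) :
    ∃ C', (clusterGraph G s).Adj C C' ∧ clusterLevel G s C' + 1 = clusterLevel G s C := by
  obtain ⟨v, rfl⟩ := toCluster_surjective C
  rw [clusterLevel_toCluster] at h
  obtain ⟨u, hu, hsuv⟩ := hconn.exists_between_dist_eq (a := s) (b := v)
    (t := G.dist s v - 1) (by omega)
  have huv : G.Adj u v := dist_eq_one_iff_adj.1 (by unfold Between at hsuv; omega)
  refine ⟨toCluster G s u, ⟨fun he => ?_, v, u, rfl, rfl, huv.symm⟩, by simp; omega⟩
  have := congrArg (clusterLevel G s) he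
  simp only [clusterLevel_toCluster] at this
  omega

lemma eq_of_adj_of_clusterLevel_succ {C C₁ C₂ : Cluster G s}
    (h₁ : (clusterGraph G s).Adj C C₁) (h₂ : (clusterGraph G s).Adj C C₂)
    (hl₁ : clusterLevel G s C₁ + 1 = clusterLevel G s C)
    (hl₂ : clusterLevel G s C₂ + 1 = clusterLevel G s C) : C₁ = C₂ := by
  obtain ⟨-, a₁, b₁, rfl, rfl, e₁⟩ := h₁
  obtain ⟨-, a₂, b₂, ha, rfl, e₂⟩ := h₂
  obtain ⟨hd, w, hw⟩ : layerRel G s a₁ a₂ := Quotient.exact ha.symm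
  simp only [clusterLevel_toCluster] at hl₁ hl₂
  -- `b₁ a₁ ⋯ a₂ b₂` stays in the layers from that of `b₁` on
  refine Quotient.sound ⟨by omega, Walk.cons e₁.symm (w.append (Walk.cons e₂ Walk.nil)), ?_⟩
  intro x hx
  simp only [Walk.support_cons, Walk.support_append, Walk.support_nil, List.mem_cons,
    List.mem_append, List.tail_cons, List.not_mem_nil, or_false] at hx
  rcases hx with rfl | hx | rfl
  · exact le_rfl
  · have := hw x hx
    omega
  · omega

lemma clusterGraph_connected (hconn : G.Connected) : (clusterGraph G s).Connected := by
  refine (connected_iff_exists_forall_reachable _).2 ⟨toCluster G s s, fun C => ?_⟩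
  induction hn : clusterLevel G s C using Nat.strong_induction_on generalizing C with
  | _ n ih =>
    rcases eq_or_ne n 0 with rfl | hn₀
    · obtain ⟨v, rfl⟩ := toCluster_surjective C
      rw [clusterLevel_toCluster, hconn.dist_eq_zero_iff] at hn
      rw [hn]
    · obtain ⟨C', hadj, hl⟩ := exists_adj_clusterLevel_succ hconn (hn ▸ hn₀)
      exact (ih _ (by omega) C' rfl).trans hadj.symm.reachable

lemma clusterGraph_isAcyclic : (clusterGraph G s).IsAcyclic := by
  refine isAcyclic_of_unique_lower_adj (clusterLevel G s)
    (fun C C' h => by rcases clusterLevel_of_adj h with h | h <;> omega)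
    (fun C C₁ C₂ h₁ h₂ hl₁ hl₂ => eq_of_adj_of_clusterLevel_succ h₁ h₂ ?_ ?_)
  · rcases clusterLevel_of_adj h₁ with h | h <;> omega
  · rcases clusterLevel_of_adj h₂ with h | h <;> omega

theorem clusterGraph_isTree (hconn : G.Connected) : (clusterGraph G s).IsTree :=
  ⟨clusterGraph_connected hconn, clusterGraph_isAcyclic⟩

instance [Finite V] : Finite (Cluster G s) := Quotient.finite _

end LayeringPartition

theorem Tdelta_card_le_Tr_sub_general
    {V : Type} [Fintype V] (G : SimpleGraph V) (hconn : G.Connected)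
    (s : V) (r : V → ℕ) (δ : ℕ)
    (Tr Tδ : Set (Cluster G s))
    (hTr : IsMinDomSubtree G s r 0 Tr)
    (hTδ : IsMinDomSubtree G s r δ Tδ)
    (R : Cluster G s) :
    (Tδ.ncard : ℤ) ≤ (Tr.ncard : ℤ) - (δ : ℤ) * (numLeaves G s Tδ R : ℤ) := by
  have hcount := (clusterGraph_isTree hconn).ncard_add_mul_ncard_leaves_le
    (ρ := clusterRadius G s r) hTr.1.1 hTr.1.2 hTδ.1.1 hTδ.1.2
    fun S hS hdom => hTδ.2 S ⟨hS, hdom⟩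
  have hleaves : numLeaves G s Tδ R ≤
      {C | C ∈ Tδ ∧ (clusterGraph G s).degreeIn Tδ C = 1}.ncard :=
    Set.ncard_le_ncard fun C hC => ⟨hC.1, hC.2.2⟩
  have := Nat.mul_le_mul_left δ hleaves
  have : Tδ.ncard + δ * numLeaves G s Tδ R ≤ Tr.ncard := by omega
  zify at this
  linarith

/-- For a minimum `r`-dominating subtree `T_r` and a minimum
`(r+δ)`-dominating subtree `T_δ` of the layering partition 𝒯 (rooted as inherited
from 𝒯, with root `R`): `|T_δ| ≤ |T_r| − δ·Λ(T_δ)`. -/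
theorem Tdelta_card_le_Tr_sub
    {V : Type} [Fintype V] (G : SimpleGraph V) (hconn : G.Connected)
    (s : V) (r : V → ℕ) (δ : ℕ)
    (Tr Tδ : Set (Cluster G s))
    (hTr : IsMinDomSubtree G s r 0 Tr)
    (hTδ : IsMinDomSubtree G s r δ Tδ)
    (R : Cluster G s) (hR : IsRootOf G s Tδ R) :
    (Tδ.ncard : ℤ) ≤ (Tr.ncard : ℤ) - (δ : ℤ) * (numLeaves G s Tδ R : ℤ) :=
  Tdelta_card_le_Tr_sub_general G hconn s r δ Tr Tδ hTr hTδ R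
end

section
/- Let G be a finite connected graph with a layering partition 𝒯 whose maximum cluster diameter is Δ, and let T_δ be any subtree of 𝒯. Then there exists a connected vertex set S ⊆ V that intersects every cluster of T_δ and satisfies |S| ≤ |T_δ| + Δ·Λ(T_δ), where |T_δ| is the number of clusters of T_δ and Λ(T_δ) is its number of leaves as a rooted tree. -/
open SimpleGraph

variable {V : Type}

/-!
Let `R₀` be the cluster of a subtree `T` in the lowest layer. Every other cluster of `T` lies
higher and has exactly one neighbour in the layer below it, its parent, so every vertex of a
non-root cluster has a neighbour in the parent cluster. Induct on `|T|`, proving the sharper bound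
`|T| + Δ (Λ - 1)`: pick a child `C₁` of `R₀`, split `T` into the branch `T₁` through `C₁` and the
rest `T₂ ∋ R₀`, and solve both. A vertex of the first solution in `C₁` has a neighbour `z ∈ R₀`;
joining `z` inside `R₀` to the second solution costs at most `Δ` vertices, and nothing when
`T₂ = {R₀}`. The leaves of `T₁` and `T₂` are leaves of `T`, and so is `C₁` when `T₁ = {C₁}`,
which pays for that `Δ`. Finally, counting leaves from another root loses at most one.
-/

namespace SimpleGraph

variable {W : Type*} {H : SimpleGraph W} {T : Set W}

theorem exists_walk_support_subset_of_induce_connected (hT : (H.induce T).Connected) {a b : W}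
    (ha : a ∈ T) (hb : b ∈ T) : ∃ w : H.Walk a b, ∀ x ∈ w.support, x ∈ T := by
  obtain ⟨w⟩ := hT.preconnected ⟨a, ha⟩ ⟨b, hb⟩
  let w' : H.Walk a b := w.map (Embedding.induce T).toHom
  refine ⟨w', fun x hx => ?_⟩
  obtain ⟨y, -, rfl⟩ := List.mem_map.mp (Walk.support_map _ w ▸ hx)
  exact y.2

theorem induce_connected_of_forall_walk {r : W} (hr : r ∈ T)
    (h : ∀ x ∈ T, ∃ w : H.Walk r x, ∀ y ∈ w.support, y ∈ T) : (H.induce T).Connected := by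
  refine induce_connected_of_patches r hr fun {x} hx => ?_
  obtain ⟨w, hw⟩ := h x hx
  exact ⟨_, hw, w.start_mem_support, w.end_mem_support, w.connected_induce_support.preconnected _ _⟩

theorem eq_singleton_or_exists_adj_of_induce_connected (hT : (H.induce T).Connected) {r : W}
    (hr : r ∈ T) : T = {r} ∨ ∃ c ∈ T, H.Adj r c := by
  refine or_iff_not_imp_left.mpr fun hne => ?_
  obtain ⟨x, hx, hxr⟩ : ∃ x ∈ T, x ≠ r := by
    by_contra! h
    exact hne (Set.eq_singleton_iff_unique_mem.mpr ⟨hr, h⟩)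
  obtain ⟨w, hw⟩ := exists_walk_support_subset_of_induce_connected hT hr hx
  cases w with
  | nil => exact absurd rfl hxr
  | cons hadj w => exact ⟨_, hw _ (by simp), hadj⟩

variable (H T) in
def branch (r a : W) : Set W :=
  {x | ∃ w : H.Walk a x, ∀ y ∈ w.support, y ∈ T \ {r}}

variable {r a : W}

theorem branch_subset : branch H T r a ⊆ T \ {r} :=
  fun _ ⟨w, hw⟩ => hw _ w.end_mem_support

theorem mem_branch_self (ha : a ∈ T \ {r}) : a ∈ branch H T r a :=
  ⟨.nil, by simpa using ha⟩

theorem mem_branch_of_adj {x y : W} (hx : x ∈ branch H T r a) (hy : y ∈ T \ {r})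
    (hxy : H.Adj x y) : y ∈ branch H T r a := by
  obtain ⟨w, hw⟩ := hx
  refine ⟨w.concat hxy, fun z hz => ?_⟩
  simp only [Walk.support_concat, List.mem_append, List.mem_singleton] at hz
  rcases hz with hz | rfl
  exacts [hw z hz, hy]

theorem induce_branch_connected (ha : a ∈ T \ {r}) : (H.induce (branch H T r a)).Connected := by
  classical
  refine induce_connected_of_forall_walk (mem_branch_self ha) fun x ⟨w, hw⟩ => ⟨w, fun y hy => ?_⟩
  exact ⟨w.takeUntil y hy, fun z hz => hw z (w.support_takeUntil_subset_support hy hz)⟩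

theorem exists_walk_diff_branch (hr : r ∈ T) : ∀ {x : W} (w : H.Walk x r),
    (∀ y ∈ w.support, y ∈ T) → x ∉ branch H T r a →
    ∃ w' : H.Walk x r, ∀ y ∈ w'.support, y ∈ T \ branch H T r a
  | _, .nil, _, hx => ⟨.nil, by simpa using And.intro hr hx⟩
  | x, .cons hxy w, hw, hx => by
    have hxT : x ∈ T := hw x (List.mem_cons_self ..)
    by_cases hxr : x = r
    · subst hxr
      exact ⟨.nil, by simpa using And.intro hxT hx⟩
    have hy := fun hy => hx (mem_branch_of_adj hy ⟨hxT, hxr⟩ hxy.symm)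
    obtain ⟨w', hw'⟩ :=
      exists_walk_diff_branch hr w (fun z hz => hw z (List.mem_cons_of_mem _ hz)) hy
    refine ⟨.cons hxy w', fun z hz => ?_⟩
    rcases List.mem_cons.mp hz with rfl | hz
    exacts [⟨hxT, hx⟩, hw' z hz]

theorem induce_diff_branch_connected (hT : (H.induce T).Connected) (hr : r ∈ T) :
    (H.induce (T \ branch H T r a)).Connected := by
  have hr' : r ∈ T \ branch H T r a := ⟨hr, fun h => (branch_subset h).2 rfl⟩
  refine induce_connected_of_forall_walk hr' fun x hx => ?_
  obtain ⟨w, hw⟩ := exists_walk_support_subset_of_induce_connected hT hx.1 hr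
  obtain ⟨w', hw'⟩ := exists_walk_diff_branch hr w hw hx.2
  exact ⟨w'.reverse, by simpa using hw'⟩

theorem exists_adj_dist_eq_of_dist_eq_add_one {s v : W} {i : ℕ} (h : H.dist s v = i + 1) :
    ∃ z, H.Adj v z ∧ H.dist s z = i := by
  obtain ⟨p, hp⟩ := exists_walk_of_dist_ne_zero (u := v) (v := s) (by rw [dist_comm, h]; omega)
  cases p with
  | nil => simp at h
  | cons hadj q =>
    refine ⟨_, hadj, ?_⟩
    have hq : H.dist s _ ≤ q.length := dist_comm (G := H) ▸ dist_le q
    rw [Walk.length_cons, dist_comm, h] at hp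
    rcases hadj.diff_dist_adj (u := s) with h' | h' | h' <;> omega

end SimpleGraph

section ClusterLayers

variable {G : SimpleGraph V} {s : V}

variable (G s) in
noncomputable def clusterLayer : Cluster G s → ℕ :=
  Quotient.lift (G.dist s) fun _ _ h => h.1

@[simp]
theorem clusterLayer_toCluster (v : V) : clusterLayer G s (toCluster G s v) = G.dist s v := rfl

theorem toCluster_eq_toCluster_iff {u v : V} :
    toCluster G s u = toCluster G s v ↔ layerRel G s u v :=
  Quotient.eq

theorem exists_toCluster_eq (C : Cluster G s) : ∃ v, toCluster G s v = C :=
  Quotient.exists_rep C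

theorem clusterLayer_eq_add_one_or_of_adj {C C' : Cluster G s}
    (h : (clusterGraph G s).Adj C C') :
    clusterLayer G s C' = clusterLayer G s C + 1 ∨
      clusterLayer G s C = clusterLayer G s C' + 1 := by
  obtain ⟨hne, u, v, rfl, rfl, huv⟩ := h
  have hlayer : G.dist s u ≠ G.dist s v := fun h =>
    hne (toCluster_eq_toCluster_iff.mpr ⟨h, .cons huv .nil, by simp [h]⟩)
  simp only [clusterLayer_toCluster]
  rcases huv.diff_dist_adj (u := s) with h | h | h <;> omega

theorem exists_walk_of_clusterWalk {m : ℕ} : ∀ {C C' : Cluster G s}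
    (p : (clusterGraph G s).Walk C C'), (∀ X ∈ p.support, m ≤ clusterLayer G s X) →
    ∀ {u : V}, toCluster G s u = C →
    ∃ v, toCluster G s v = C' ∧ ∃ w : G.Walk u v, ∀ x ∈ w.support, m ≤ G.dist s x
  | _, _, .nil, hp, u, hu => ⟨u, hu, .nil, by simpa [← hu] using hp⟩
  | _, _, .cons ⟨_, a, b, ha, hb, hab⟩ q, hp, u, hu => by
    have hmu : m ≤ G.dist s u := by simpa [← hu] using hp _ (List.mem_cons_self ..)
    obtain ⟨hua, w₁, hw₁⟩ := toCluster_eq_toCluster_iff.mp (hu.trans ha.symm)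
    obtain ⟨v, hv, w₂, hw₂⟩ :=
      exists_walk_of_clusterWalk q (fun X hX => hp X (List.mem_cons_of_mem _ hX)) hb
    refine ⟨v, hv, w₁.append (.cons hab w₂), fun x hx => ?_⟩
    rcases (Walk.mem_support_append_iff _ _).mp hx with hx | hx
    · exact hmu.trans (hw₁ x hx)
    rcases List.mem_cons.mp hx with rfl | hx
    exacts [hua ▸ hmu, hw₂ x hx]

theorem eq_of_clusterWalk_above {C C' : Cluster G s} (p : (clusterGraph G s).Walk C C')
    (hp : ∀ X ∈ p.support, clusterLayer G s C ≤ clusterLayer G s X)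
    (hC' : clusterLayer G s C' = clusterLayer G s C) : C = C' := by
  obtain ⟨u, rfl⟩ := exists_toCluster_eq C
  obtain ⟨v, rfl, w, hw⟩ := exists_walk_of_clusterWalk p hp rfl
  exact toCluster_eq_toCluster_iff.mpr ⟨hC'.symm, w, hw⟩

theorem eq_of_adj_of_clusterLayer_add_one_eq {C P Q : Cluster G s}
    (hP : (clusterGraph G s).Adj C P) (hQ : (clusterGraph G s).Adj C Q)
    (hPC : clusterLayer G s P + 1 = clusterLayer G s C)
    (hQC : clusterLayer G s Q + 1 = clusterLayer G s C) : P = Q := by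
  refine eq_of_clusterWalk_above (.cons hP.symm (.cons hQ .nil)) (fun X hX => ?_) (by omega)
  simp only [Walk.support_cons, Walk.support_nil, List.mem_cons, List.not_mem_nil,
    or_false] at hX
  rcases hX with rfl | rfl | rfl <;> omega

theorem exists_adj_toCluster_eq_of_adj {R C : Cluster G s} (hRC : (clusterGraph G s).Adj R C)
    (hlayer : clusterLayer G s C = clusterLayer G s R + 1) {y : V} (hy : toCluster G s y = C) :
    ∃ z, G.Adj y z ∧ toCluster G s z = R := by
  subst hy
  obtain ⟨z, hyz, hz⟩ := exists_adj_dist_eq_of_dist_eq_add_one hlayer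
  have hzy : (clusterGraph G s).Adj (toCluster G s y) (toCluster G s z) :=
    ⟨fun h => by simpa [hz, hlayer] using congrArg (clusterLayer G s) h, y, z, rfl, rfl, hyz⟩
  exact ⟨z, hyz,
    eq_of_adj_of_clusterLayer_add_one_eq hzy hRC.symm (by simp [hz, hlayer]) hlayer.symm⟩

end ClusterLayers

instance [Finite V] {G : SimpleGraph V} {s : V} : Finite (Cluster G s) := Quotient.finite _

section LowestCluster

variable {G : SimpleGraph V} {s : V} {T : Set (Cluster G s)} {R : Cluster G s}

variable (G s) in
def leafSet (T : Set (Cluster G s)) (R : Cluster G s) : Set (Cluster G s) :=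
  {C | C ∈ T ∧ C ≠ R ∧ clusterDegree G s T C = 1}

theorem numLeaves_eq_ncard_leafSet : numLeaves G s T R = (leafSet G s T R).ncard := rfl

theorem clusterLayer_lt_of_mem_of_ne (hT : IsSubtree G s T) (hR : R ∈ T)
    (hmin : ∀ C ∈ T, clusterLayer G s R ≤ clusterLayer G s C) {X : Cluster G s} (hX : X ∈ T)
    (hXR : X ≠ R) : clusterLayer G s R < clusterLayer G s X := by
  refine (hmin X hX).lt_of_ne fun h => hXR ?_
  obtain ⟨w, hw⟩ := exists_walk_support_subset_of_induce_connected hT hX hR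
  exact eq_of_clusterWalk_above w (fun Y hY => h ▸ hmin Y (hw Y hY)) h

theorem clusterLayer_eq_add_one_of_adj (hmin : ∀ C ∈ T, clusterLayer G s R ≤ clusterLayer G s C)
    {X : Cluster G s} (hX : X ∈ T) (hRX : (clusterGraph G s).Adj R X) :
    clusterLayer G s X = clusterLayer G s R + 1 := by
  have := hmin X hX
  rcases clusterLayer_eq_add_one_or_of_adj hRX with h | h <;> omega

/-- A cluster of maximal layer in `T` is a leaf. -/
theorem numLeaves_pos [Finite V] (hT : IsSubtree G s T) (hR : R ∈ T)
    (hmin : ∀ C ∈ T, clusterLayer G s R ≤ clusterLayer G s C) (hTR : T ≠ {R}) :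
    0 < numLeaves G s T R := by
  obtain ⟨X, hX, hmax⟩ := Set.exists_max_image T (clusterLayer G s) T.toFinite ⟨R, hR⟩
  obtain ⟨Y, hY, hYR⟩ : ∃ Y ∈ T, Y ≠ R := by
    by_contra! h
    exact hTR (Set.eq_singleton_iff_unique_mem.mpr ⟨hR, h⟩)
  have hXR : X ≠ R := by
    rintro rfl
    exact (hmax Y hY).not_gt (clusterLayer_lt_of_mem_of_ne hT hR hmin hY hYR)
  obtain hTX | ⟨P, hP, hXP⟩ := eq_singleton_or_exists_adj_of_induce_connected hT hX
  · exact absurd (hTX ▸ hR : R ∈ ({X} : Set _)) hXR.symm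
  have hparent : ∀ Q ∈ T, (clusterGraph G s).Adj X Q →
      clusterLayer G s Q + 1 = clusterLayer G s X := fun Q hQ hXQ => by
    have := hmax Q hQ
    rcases clusterLayer_eq_add_one_or_of_adj hXQ with h | h <;> omega
  refine (Set.ncard_pos (Set.toFinite _)).mpr ⟨X, hX, hXR, Set.ncard_eq_one.mpr ⟨P, ?_⟩⟩
  ext Q
  refine ⟨fun ⟨hQ, hXQ⟩ => ?_, fun h => h ▸ ⟨hP, hXP⟩⟩
  exact (eq_of_adj_of_clusterLayer_add_one_eq hXP hXQ (hparent P hP hXP) (hparent Q hQ hXQ)).symm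

theorem leafSet_subset_leafSet {A : Set (Cluster G s)} {R' : Cluster G s} (hA : A ⊆ T)
    (h : ∀ X ∈ leafSet G s A R', X ≠ R ∧ ∀ Y ∈ T, (clusterGraph G s).Adj X Y → Y ∈ A) :
    leafSet G s A R' ⊆ leafSet G s T R := by
  intro X hX
  obtain ⟨hXR, hnbr⟩ := h X hX
  have hdeg : clusterDegree G s A X = clusterDegree G s T X := by
    unfold clusterDegree
    congr 1
    ext Y
    exact ⟨fun ⟨hY, hXY⟩ => ⟨hA hY, hXY⟩, fun ⟨hY, hXY⟩ => ⟨hnbr Y hY hXY, hXY⟩⟩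
  exact ⟨hA hX.1, hXR, hdeg ▸ hX.2.2⟩

end LowestCluster

section Branch

variable {G : SimpleGraph V} {s : V} {T : Set (Cluster G s)} {R C₁ : Cluster G s}

theorem clusterLayer_le_of_mem_diff (hT : IsSubtree G s T) (hR : R ∈ T)
    (hmin : ∀ C ∈ T, clusterLayer G s R ≤ clusterLayer G s C) (hC₁ : C₁ ∈ T)
    (hRC₁ : (clusterGraph G s).Adj R C₁) {X : Cluster G s} (hX : X ∈ T \ {R}) :
    clusterLayer G s C₁ ≤ clusterLayer G s X := by
  obtain ⟨hXT, hXR⟩ := hX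
  have := clusterLayer_lt_of_mem_of_ne hT hR hmin hXT hXR
  have := clusterLayer_eq_add_one_of_adj hmin hC₁ hRC₁
  omega

theorem eq_of_mem_branch_of_adj (hT : IsSubtree G s T) (hR : R ∈ T)
    (hmin : ∀ C ∈ T, clusterLayer G s R ≤ clusterLayer G s C) (hC₁ : C₁ ∈ T)
    (hRC₁ : (clusterGraph G s).Adj R C₁) {X : Cluster G s}
    (hX : X ∈ branch (clusterGraph G s) T R C₁) (hRX : (clusterGraph G s).Adj R X) : X = C₁ := by
  obtain ⟨w, hw⟩ := hX
  refine (eq_of_clusterWalk_above w (fun Y hY => ?_) ?_).symm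
  · exact clusterLayer_le_of_mem_diff hT hR hmin hC₁ hRC₁ (hw Y hY)
  · rw [clusterLayer_eq_add_one_of_adj hmin (hw X w.end_mem_support).1 hRX,
      clusterLayer_eq_add_one_of_adj hmin hC₁ hRC₁]

theorem leafSet_branch_subset (hT : IsSubtree G s T) (hR : R ∈ T)
    (hmin : ∀ C ∈ T, clusterLayer G s R ≤ clusterLayer G s C) (hC₁ : C₁ ∈ T)
    (hRC₁ : (clusterGraph G s).Adj R C₁) :
    leafSet G s (branch (clusterGraph G s) T R C₁) C₁ ⊆ leafSet G s T R := by
  refine leafSet_subset_leafSet (branch_subset.trans Set.sdiff_subset) fun X ⟨hX, hXC₁, _⟩ =>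
    ⟨(branch_subset hX).2, fun Y hY hXY => mem_branch_of_adj hX ⟨hY, ?_⟩ hXY⟩
  rintro rfl
  exact hXC₁ (eq_of_mem_branch_of_adj hT hR hmin hC₁ hRC₁ hX hXY.symm)

theorem leafSet_diff_branch_subset :
    leafSet G s (T \ branch (clusterGraph G s) T R C₁) R ⊆ leafSet G s T R :=
  leafSet_subset_leafSet Set.sdiff_subset fun _ ⟨hX, hXR, _⟩ =>
    ⟨hXR, fun _ hY hXY => ⟨hY, fun hYB => hX.2 (mem_branch_of_adj hYB ⟨hX.1, hXR⟩ hXY.symm)⟩⟩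

theorem mem_leafSet_of_branch_eq_singleton (hR : R ∈ T) (hC₁ : C₁ ∈ T)
    (hRC₁ : (clusterGraph G s).Adj R C₁) (hB : branch (clusterGraph G s) T R C₁ = {C₁}) :
    C₁ ∈ leafSet G s T R := by
  refine ⟨hC₁, hRC₁.ne', Set.ncard_eq_one.mpr ⟨R, ?_⟩⟩
  ext Y
  refine ⟨fun ⟨hY, hC₁Y⟩ => ?_, fun h => h ▸ ⟨hR, hRC₁.symm⟩⟩
  by_contra hYR
  have hYB := mem_branch_of_adj (mem_branch_self ⟨hC₁, hRC₁.ne'⟩) ⟨hY, hYR⟩ hC₁Y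
  rw [hB, Set.mem_singleton_iff] at hYB
  exact hC₁Y.ne hYB.symm

theorem numLeaves_branch_add_le [Finite V] (hT : IsSubtree G s T) (hR : R ∈ T)
    (hmin : ∀ C ∈ T, clusterLayer G s R ≤ clusterLayer G s C) (hC₁ : C₁ ∈ T)
    (hRC₁ : (clusterGraph G s).Adj R C₁) :
    max (numLeaves G s (branch (clusterGraph G s) T R C₁) C₁) 1 +
      numLeaves G s (T \ branch (clusterGraph G s) T R C₁) R ≤ numLeaves G s T R := by
  set B := branch (clusterGraph G s) T R C₁ with hBdef
  simp only [numLeaves_eq_ncard_leafSet]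
  rcases Nat.eq_zero_or_pos (leafSet G s B C₁).ncard with h | h
  · have hB : B = {C₁} := by
      by_contra hB
      refine (numLeaves_pos (induce_branch_connected ⟨hC₁, hRC₁.ne'⟩)
        (mem_branch_self ⟨hC₁, hRC₁.ne'⟩)
        (fun X hX => clusterLayer_le_of_mem_diff hT hR hmin hC₁ hRC₁ (branch_subset hX)) hB).ne' h
    have hC₁' : C₁ ∉ leafSet G s (T \ B) R := fun h => h.1.2 (hB ▸ rfl)
    have := Set.ncard_le_ncard (Set.insert_subset
      (mem_leafSet_of_branch_eq_singleton hR hC₁ hRC₁ hB) (leafSet_diff_branch_subset (C₁ := C₁)))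
    rw [Set.ncard_insert_of_notMem hC₁'] at this
    omega
  · have := Set.ncard_le_ncard (Set.union_subset (leafSet_branch_subset hT hR hmin hC₁ hRC₁)
      (leafSet_diff_branch_subset (C₁ := C₁)))
    rw [Set.ncard_union_eq (Set.disjoint_left.mpr fun X h₁ h₂ => h₂.1.2 h₁.1), ← hBdef] at this
    omega

end Branch

section Transversal

variable {G : SimpleGraph V} {s : V}

theorem ncard_union_support_le {A : Set V} {u v : V} (hu : u ∈ A) (q : G.Walk u v)
    (hA : A.Finite := by toFinite_tac) :
    (A ∪ {x | x ∈ q.support}).ncard ≤ A.ncard + q.length := by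
  classical
  have htail : {x | x ∈ q.support.tail} = (q.support.tail.toFinset : Set V) := by ext; simp
  calc (A ∪ {x | x ∈ q.support}).ncard ≤ (A ∪ {x | x ∈ q.support.tail}).ncard := by
        refine Set.ncard_le_ncard (Set.union_subset Set.subset_union_left fun x hx => ?_)
          (hA.union (List.finite_toSet _))
        rw [Set.mem_ofPred_eq, ← q.cons_tail_support, List.mem_cons] at hx
        rcases hx with rfl | hx
        exacts [Or.inl hu, Or.inr hx]
    _ ≤ A.ncard + {x | x ∈ q.support.tail}.ncard := Set.ncard_union_le _ _
    _ ≤ A.ncard + q.length := by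
        rw [htail, Set.ncard_coe_finset]
        gcongr
        exact (List.toFinset_card_le _).trans (by simp [Walk.length_support])

variable (G s) in
def IsConnTransversal (T : Set (Cluster G s)) (S : Set V) : Prop :=
  IsConnSet G S ∧ ∀ C ∈ T, ∃ v ∈ S, toCluster G s v = C

theorem isConnTransversal_singleton {v : V} {C : Cluster G s} (hv : toCluster G s v = C) :
    IsConnTransversal G s {C} {v} := by
  refine ⟨?_, fun C' hC' => ⟨v, rfl, hv.trans hC'.symm⟩⟩
  rw [IsConnSet, induce_singleton_eq_top]
  exact connected_top

theorem IsConnTransversal.union {T₁ T₂ : Set (Cluster G s)} {S₁ S₂ : Set V}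
    (h₁ : IsConnTransversal G s T₁ S₁) (h₂ : IsConnTransversal G s T₂ S₂) {a b : V}
    (ha : a ∈ S₁) (hb : b ∈ S₂) (hab : G.Adj a b) :
    IsConnTransversal G s (T₁ ∪ T₂) (S₁ ∪ S₂) := by
  refine ⟨connected_induce_union h₁.1.preconnected h₂.1.preconnected ha hb hab, fun C hC => ?_⟩
  rcases hC with hC | hC
  · obtain ⟨v, hv, rfl⟩ := h₁.2 C hC
    exact ⟨v, Or.inl hv, rfl⟩
  · obtain ⟨v, hv, rfl⟩ := h₂.2 C hC
    exact ⟨v, Or.inr hv, rfl⟩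

/-- Join `z` to the representative of its cluster by a shortest path. -/
theorem IsConnTransversal.exists_mem [Finite V] {Δ : ℕ}
    (hΔ : ∀ u v : V, layerRel G s u v → G.dist u v ≤ Δ) {T : Set (Cluster G s)} {S : Set V}
    (hS : IsConnTransversal G s T S) {C : Cluster G s} (hC : C ∈ T) {z : V}
    (hz : toCluster G s z = C) :
    ∃ S', IsConnTransversal G s T S' ∧ z ∈ S' ∧ S'.ncard ≤ S.ncard + Δ := by
  obtain ⟨y, hyS, hy⟩ := hS.2 C hC
  have hyz : layerRel G s y z := toCluster_eq_toCluster_iff.mp (hy.trans hz.symm)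
  obtain ⟨q, hq⟩ := hyz.2.choose.reachable.exists_walk_length_eq_dist
  refine ⟨S ∪ {x | x ∈ q.support}, ⟨?_, fun C hC => ?_⟩, Or.inr q.end_mem_support, ?_⟩
  · exact induce_union_connected hS.1.preconnected q.connected_induce_support.preconnected
      ⟨y, hyS, q.start_mem_support⟩
  · obtain ⟨v, hv, rfl⟩ := hS.2 C hC
    exact ⟨v, Or.inl hv, rfl⟩
  · calc _ ≤ S.ncard + q.length := ncard_union_support_le hyS q
      _ ≤ S.ncard + Δ := by rw [hq]; gcongr; exact hΔ y z hyz

end Transversal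

section Construction

variable [Finite V] {G : SimpleGraph V} {s : V} {Δ : ℕ} {T : Set (Cluster G s)} {R : Cluster G s}

theorem exists_isConnTransversal_mem (hΔ : ∀ u v : V, layerRel G s u v → G.dist u v ≤ Δ)
    (hT : IsSubtree G s T) (hR : R ∈ T) (hmin : ∀ C ∈ T, clusterLayer G s R ≤ clusterLayer G s C)
    (hbound : T ≠ {R} → ∃ S, IsConnTransversal G s T S ∧
      S.ncard ≤ T.ncard + Δ * (numLeaves G s T R - 1))
    {z : V} (hz : toCluster G s z = R) :
    ∃ S, IsConnTransversal G s T S ∧ z ∈ S ∧ S.ncard ≤ T.ncard + Δ * numLeaves G s T R := by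
  by_cases hTR : T = {R}
  · subst hTR
    exact ⟨{z}, isConnTransversal_singleton hz, rfl, by simp⟩
  obtain ⟨S, hS, hcard⟩ := hbound hTR
  obtain ⟨S', hS', hzS', hcard'⟩ := hS.exists_mem hΔ hR hz
  have hleaf : Δ * (numLeaves G s T R - 1) + Δ = Δ * numLeaves G s T R := by
    rw [← mul_add_one, Nat.sub_one_add_one (numLeaves_pos hT hR hmin hTR).ne']
  exact ⟨S', hS', hzS', by omega⟩

theorem exists_isConnTransversal_of_lowest
    (hΔ : ∀ u v : V, layerRel G s u v → G.dist u v ≤ Δ) (hT : IsSubtree G s T) (hR : R ∈ T)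
    (hmin : ∀ C ∈ T, clusterLayer G s R ≤ clusterLayer G s C) :
    ∃ S, IsConnTransversal G s T S ∧ S.ncard ≤ T.ncard + Δ * (numLeaves G s T R - 1) := by
  induction hn : T.ncard using Nat.strong_induction_on generalizing T R with
  | _ n ih =>
  obtain rfl | ⟨C₁, hC₁, hRC₁⟩ := eq_singleton_or_exists_adj_of_induce_connected hT hR
  · obtain ⟨y, hy⟩ := exists_toCluster_eq R
    exact ⟨{y}, isConnTransversal_singleton hy, by simp [← hn]⟩
  set B := branch (clusterGraph G s) T R C₁ with hBdef
  have hC₁B : C₁ ∈ B := mem_branch_self ⟨hC₁, hRC₁.ne'⟩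
  have hRB : R ∉ B := fun h => (branch_subset h).2 rfl
  have hBT : B ⊆ T := branch_subset.trans Set.sdiff_subset
  have hT₁ : IsSubtree G s B := induce_branch_connected ⟨hC₁, hRC₁.ne'⟩
  have hmin₁ : ∀ X ∈ B, clusterLayer G s C₁ ≤ clusterLayer G s X :=
    fun X hX => clusterLayer_le_of_mem_diff hT hR hmin hC₁ hRC₁ (branch_subset hX)
  have hT₂ : IsSubtree G s (T \ B) := induce_diff_branch_connected hT hR
  have hmin₂ : ∀ X ∈ T \ B, clusterLayer G s R ≤ clusterLayer G s X := fun X hX => hmin X hX.1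
  obtain ⟨S₁, hS₁, hcard₁⟩ :=
    ih _ (hn ▸ Set.ncard_lt_ncard ⟨hBT, fun h => hRB (h hR)⟩) hT₁ hC₁B hmin₁ rfl
  obtain ⟨y, hyS₁, hy⟩ := hS₁.2 C₁ hC₁B
  obtain ⟨z, hyz, hz⟩ :=
    exists_adj_toCluster_eq_of_adj hRC₁ (clusterLayer_eq_add_one_of_adj hmin hC₁ hRC₁) hy
  obtain ⟨S₂, hS₂, hzS₂, hcard₂⟩ := exists_isConnTransversal_mem hΔ hT₂ ⟨hR, hRB⟩ hmin₂
    (fun _ => ih _ (hn ▸ Set.ncard_lt_ncard ⟨Set.sdiff_subset, fun h => (h hC₁).2 hC₁B⟩)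
      hT₂ ⟨hR, hRB⟩ hmin₂ rfl) hz
  refine ⟨S₂ ∪ S₁, Set.sdiff_union_of_subset hBT ▸ hS₂.union hS₁ hzS₂ hyS₁ hyz.symm, ?_⟩
  have hleaves := numLeaves_branch_add_le hT hR hmin hC₁ hRC₁
  rw [← hBdef] at hleaves
  calc (S₂ ∪ S₁).ncard ≤ S₂.ncard + S₁.ncard := Set.ncard_union_le _ _
    _ ≤ (T \ B).ncard + B.ncard +
        Δ * (numLeaves G s (T \ B) R + (numLeaves G s B C₁ - 1)) := by rw [mul_add]; omega
    _ ≤ n + Δ * (numLeaves G s T R - 1) := by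
        rw [Set.ncard_sdiff_add_ncard_of_subset hBT, hn]
        gcongr
        omega

end Construction

theorem exists_connected_transversal_general
    {V : Type} [Fintype V] (G : SimpleGraph V)
    (s : V) (Δ : ℕ) (hΔ : IsMaxClusterDiam G s Δ)
    (Tδ : Set (Cluster G s)) (hsub : IsSubtree G s Tδ)
    (R : Cluster G s) :
    ∃ S : Set V, IsConnSet G S ∧
      (∀ C ∈ Tδ, ∃ v ∈ S, toCluster G s v = C) ∧
      S.ncard ≤ Tδ.ncard + Δ * numLeaves G s Tδ R := by
  obtain ⟨R₀, hR₀, hmin⟩ := Set.exists_min_image Tδ (clusterLayer G s) Tδ.toFinite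
    (Set.nonempty_coe_sort.mp hsub.nonempty)
  obtain ⟨S, ⟨hS, hhit⟩, hcard⟩ :=
    exists_isConnTransversal_of_lowest (fun u v h => hΔ.2 ⟨u, v, h, rfl⟩) hsub hR₀ hmin
  have hleaves : numLeaves G s Tδ R₀ - 1 ≤ numLeaves G s Tδ R :=
    (Set.pred_ncard_le_ncard_sdiff_singleton _ R).trans
      (Set.ncard_le_ncard fun C ⟨⟨hC, _, hdeg⟩, hCR⟩ => ⟨hC, hCR, hdeg⟩)
  exact ⟨S, hS, hhit, hcard.trans (by gcongr)⟩

/-- For any subtree `T_δ` of the layering partition 𝒯 of `G`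
(maximum cluster diameter `Δ`), rooted as inherited from 𝒯 at `R`, there is a
connected vertex set `S` intersecting every cluster of `T_δ` with
`|S| ≤ |T_δ| + Δ·Λ(T_δ)`. -/
theorem exists_connected_transversal
    {V : Type} [Fintype V] (G : SimpleGraph V) (hconn : G.Connected)
    (s : V) (Δ : ℕ) (hΔ : IsMaxClusterDiam G s Δ)
    (Tδ : Set (Cluster G s)) (hsub : IsSubtree G s Tδ)
    (R : Cluster G s) (hR : IsRootOf G s Tδ R) :
    ∃ S : Set V, IsConnSet G S ∧
      (∀ C ∈ Tδ, ∃ v ∈ S, toCluster G s v = C) ∧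
      S.ncard ≤ Tδ.ncard + Δ * numLeaves G s Tδ R :=
  exists_connected_transversal_general G s Δ hΔ Tδ hsub R
end
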